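/- arXiv:2312.11861 — 3 statements merged into one kernel-verified Lean document; each statement's English description precedes it below -/
import Mathlib

section
/- Fix integers n ≥ 1, d ≥ 1, reals 0 < μ ≤ L, a stepsize 0 < α < 2/L and a probability p ∈ (0,1]. For i = 1,…,n let f_i : ℝ^d → ℝ be differentiable, μ-strongly convex and L-smooth, and let r : ℝ^d → ℝ be convex and continuous. Let S be an n×n real symmetric positive semidefinite matrix such that I − S² is positive semidefinite and such that ‖S·W‖_F² ≥ (1/5)·‖W‖_F² for every n×d real matrix W all of whose columns lie in the column space of S. Suppose (x★, z★, u★) are n×d real matrices such that every column of u★ lies in the column space of S and, writing a_i for the i-th row of a matrix a: (z★)_i = (x★)_i − α·∇f_i((x★)_i) − α·(S·u★)_i for every i; S·z★ = 0; and (x★)_i = prox_{αr}((z★)_i) for every i. Fix an n×d matrix x⁰ and set u⁰ = 0. For a coin sequence θ = (θ_0,…,θ_{T−1}) ∈ {0,1}^T define recursively, for t = 0,…,T−1: z^t is the n×d matrix with rows (z^t)_i = (x^t)_i − α·∇f_i((x^t)_i) − α·(S·u^t)_i; u^{t+1} = u^t + θ_t·(p/α)·S·z^t; and x^{t+1} is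 the n×d matrix with rows (x^{t+1})_i = prox_{αr}( ((I − θ_t·S²)·z^t)_i ). Set ζ = max{ (1−αμ)², (1−αL)², 1 − p²/5 } and Ψ⁰ = ‖x⁰ − x★‖_F² + (α²/p²)·‖u⁰ − u★‖_F². Then for every T ≥ 0, the expectation over independent Bernoulli(p) coins of the squared error, namely Σ_{θ ∈ {0,1}^T} ( ∏_{t=0}^{T−1} p^{θ_t}(1−p)^{1−θ_t} ) · ‖x^T(θ) − x★‖_F² , is at most ζ^T · Ψ⁰. -/
set_option maxHeartbeats 1000000

noncomputable section

/-- An `n × d` real matrix, viewed as `n` rows in Euclidean space `ℝ^d`. -/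
abbrev Mat (n d : ℕ) := Fin n → EuclideanSpace ℝ (Fin d)

/-- Multiplication of an `n × n` matrix with an `n × d` matrix. -/
def matMul {n d : ℕ} (S : Matrix (Fin n) (Fin n) ℝ) (x : Mat n d) : Mat n d :=
  fun i => ∑ j, S i j • x j

/-- Squared Frobenius norm of an `n × d` matrix. -/
def fro2 {n d : ℕ} (x : Mat n d) : ℝ := ∑ i, ‖x i‖ ^ 2

/-- The MG-Skip iteration: given a stepsize `α`, probability `p`, gradients `g i`,
a proximal map `prox`, a communication matrix `S`, an initial point `x0` and a coin
sequence `θ`, produce the pair `(x^t, u^t)` of primal and (scaled) dual iterates. -/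
def mgIter {n d : ℕ} (α p : ℝ)
    (g : Fin n → EuclideanSpace ℝ (Fin d) → EuclideanSpace ℝ (Fin d))
    (prox : EuclideanSpace ℝ (Fin d) → EuclideanSpace ℝ (Fin d))
    (S : Matrix (Fin n) (Fin n) ℝ) (x0 : Mat n d) (θ : ℕ → Bool) :
    ℕ → Mat n d × Mat n d
  | 0 => (x0, 0)
  | t + 1 =>
    let xu := mgIter α p g prox S x0 θ t
    let z : Mat n d := fun i => xu.1 i - α • g i (xu.1 i) - α • matMul S xu.2 i
    (fun i => prox ((z - (if θ t then (1 : ℝ) else 0) • matMul (S * S) z) i),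
      xu.2 + ((if θ t then (1 : ℝ) else 0) * (p / α)) • matMul S z)

section ConvexAnalysis
open InnerProductSpace Filter Set Topology
variable {F : Type*} [NormedAddCommGroup F] [InnerProductSpace ℝ F] [CompleteSpace F]
local notation "⟪" x ", " y "⟫" => @inner ℝ _ _ x y

lemma hasDerivAt_line (h : F → ℝ) (G : F → F) (hG : ∀ x, HasGradientAt h (G x) x)
    (x y : F) (t : ℝ) :
    HasDerivAt (fun t : ℝ => h (x + t • (y - x))) ⟪G (x + t • (y - x)), y - x⟫ t := by
  have hc : HasDerivAt (fun t : ℝ => x + t • (y - x)) (y - x) t := by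
    simpa using ((hasDerivAt_id (t:ℝ)).smul_const (y - x)).const_add x
  have := ((hasGradientAt_iff_hasFDerivAt.1 (hG (x + t • (y - x)))).comp_hasDerivAt t hc)
  simp at this; exact this

/-- First-order condition for a convex differentiable function. -/
lemma convex_first_order {h : F → ℝ} {G : F → F}
    (hconv : ConvexOn ℝ Set.univ h) (hG : ∀ x, HasGradientAt h (G x) x) (x y : F) :
    h x + ⟪G x, y - x⟫ ≤ h y := by
  have hder := hasDerivAt_line h G hG x y 0
  simp only [zero_smul, add_zero] at hder
  have htend : Tendsto (fun t : ℝ => (h (x + t • (y - x)) - h x) / t) (𝓝[>] (0:ℝ))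
      (𝓝 ⟪G x, y - x⟫) := by
    have := hasDerivAt_iff_tendsto_slope.1 hder
    have h2 := this.mono_left (nhdsWithin_mono _ (by intro a ha; exact ne_of_gt ha))
    refine h2.congr' ?_
    filter_upwards [self_mem_nhdsWithin] with t ht
    simp [slope, vsub_eq_sub, div_eq_inv_mul]
  have key : ⟪G x, y - x⟫ ≤ h y - h x := by
    refine le_of_tendsto htend ?_
    filter_upwards [Ioo_mem_nhdsGT_of_mem (by norm_num : (0:ℝ) ∈ Ico 0 1)] with t ht
    have hconvineq := hconv.2 (mem_univ x) (mem_univ y) (by linarith [ht.2] : (0:ℝ) ≤ 1 - t)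
      (le_of_lt ht.1) (by ring)
    have hxy : (1 - t) • x + t • y = x + t • (y - x) := by
      rw [smul_sub, sub_smul, one_smul]; abel
    rw [hxy] at hconvineq
    rw [div_le_iff₀ ht.1]
    simp only [smul_eq_mul] at hconvineq
    nlinarith [hconvineq]
  linarith


/-- Descent lemma. -/
lemma descent_lemma {h : F → ℝ} {G : F → F} {β : ℝ}
    (hG : ∀ x, HasGradientAt h (G x) x)
    (hLip : ∀ a b, ‖G a - G b‖ ≤ β * ‖a - b‖) (x y : F) :
    h y ≤ h x + ⟪G x, y - x⟫ + β / 2 * ‖y - x‖ ^ 2 := by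
  set ψ : ℝ → ℝ := fun t => h (x + t • (y - x)) - t * ⟪G x, y - x⟫ - β / 2 * t ^ 2 * ‖y - x‖ ^ 2 with hψ
  have hder : ∀ t : ℝ, HasDerivAt ψ
      (⟪G (x + t • (y - x)), y - x⟫ - ⟪G x, y - x⟫ - β * t * ‖y - x‖ ^ 2) t := by
    intro t
    have h1 := hasDerivAt_line h G hG x y t
    have h2 : HasDerivAt (fun t : ℝ => t * ⟪G x, y - x⟫) ⟪G x, y - x⟫ t := by
      simpa using (hasDerivAt_id t).mul_const ⟪G x, y - x⟫
    have h3 : HasDerivAt (fun t : ℝ => β / 2 * t ^ 2 * ‖y - x‖ ^ 2)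
        (β * t * ‖y - x‖ ^ 2) t := by
      have := ((hasDerivAt_pow 2 t).const_mul (β / 2)).mul_const (‖y - x‖ ^ 2)
      exact this.congr_deriv (by rw [show (2:ℕ) - 1 = 1 from rfl]; push_cast; ring)
    exact (h1.sub h2).sub h3
  have hmono : ψ 1 ≤ ψ 0 := by
    refine antitoneOn_of_deriv_nonpos (convex_Icc (0:ℝ) 1)
      (fun t ht => ((hder t).continuousAt.continuousWithinAt))
      (fun t ht => ((hder t).differentiableAt.differentiableWithinAt))
      (fun t ht => ?_) (by norm_num : (0:ℝ) ∈ Icc (0:ℝ) 1)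
        (by norm_num : (1:ℝ) ∈ Icc (0:ℝ) 1) zero_le_one
    rw [(hder t).deriv]
    rw [interior_Icc] at ht
    have hcs : ⟪G (x + t • (y - x)) - G x, y - x⟫ ≤ β * t * ‖y - x‖ ^ 2 := by
      calc ⟪G (x + t • (y - x)) - G x, y - x⟫ ≤ ‖G (x + t • (y - x)) - G x‖ * ‖y - x‖ :=
            real_inner_le_norm _ _
        _ ≤ (β * ‖(x + t • (y - x)) - x‖) * ‖y - x‖ := by
            have := hLip (x + t • (y - x)) x
            simpa using mul_le_mul_of_nonneg_right (by simpa using this) (norm_nonneg (y - x))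
        _ = β * t * ‖y - x‖ ^ 2 := by
            simp [norm_smul, abs_of_pos ht.1]; ring
    rw [inner_sub_left] at hcs
    linarith
  have h0 : ψ 0 = h x := by simp [hψ]
  have h1 : ψ 1 = h y - ⟪G x, y - x⟫ - β / 2 * ‖y - x‖ ^ 2 := by simp [hψ]
  rw [h0, h1] at hmono
  linarith


/-- Co-coercivity from convexity + quadratic upper bounds. -/
lemma cocoercive {h : F → ℝ} {G : F → F} {β : ℝ} (hβ : 0 < β)
    (hLB : ∀ a b, h a + ⟪G a, b - a⟫ ≤ h b)
    (hUB : ∀ a b, h b ≤ h a + ⟪G a, b - a⟫ + β / 2 * ‖b - a‖ ^ 2) (x y : F) :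
    ‖G x - G y‖ ^ 2 ≤ β * ⟪G x - G y, x - y⟫ := by
  have key : ∀ a b : F, h a + ⟪G a, b - a⟫ + 1 / (2 * β) * ‖G b - G a‖ ^ 2 ≤ h b := by
    intro a b
    set u := G b - G a with hu
    set w := b - (1 / β) • u with hw
    have h1 : h a + ⟪G a, w - a⟫ ≤ h w := hLB a w
    have h2 : h w ≤ h b + ⟪G b, w - b⟫ + β / 2 * ‖w - b‖ ^ 2 := hUB b w
    have h3 : w - b = -((1 / β) • u) := by rw [hw]; abel
    have h4 : ⟪G b, w - b⟫ = -(1 / β) * ⟪G b, u⟫ := by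
      rw [h3, inner_neg_right, real_inner_smul_right]; ring
    have h5 : ‖w - b‖ ^ 2 = (1 / β) ^ 2 * ‖u‖ ^ 2 := by
      rw [h3, norm_neg, norm_smul]
      simp [abs_of_pos (by positivity : (0:ℝ) < 1/β), mul_pow]
    have h6 : ⟪G a, w - a⟫ = ⟪G a, b - a⟫ - (1 / β) * ⟪G a, u⟫ := by
      have : w - a = (b - a) - (1 / β) • u := by rw [hw]; abel
      rw [this, inner_sub_right, real_inner_smul_right]
    have h7 : ⟪G b, u⟫ - ⟪G a, u⟫ = ‖u‖ ^ 2 := by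
      rw [← inner_sub_left, ← hu, real_inner_self_eq_norm_sq]
    have hβ' : β ≠ 0 := ne_of_gt hβ
    rw [h4, h5] at h2
    rw [h6] at h1
    have : 1 / (2 * β) * ‖u‖ ^ 2 = (1/β) * ‖u‖^2 - β/2 * ((1/β)^2 * ‖u‖^2) := by
      field_simp; ring
    have h8 := congrArg (fun z => (1/β) * z) h7
    simp only [mul_sub] at h8
    linarith [h1, h2, h8.le, h8.ge]
  have k1 := key x y
  have k2 := key y x
  have e1 : ⟪G x, y - x⟫ + ⟪G y, x - y⟫ = -⟪G x - G y, x - y⟫ := by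
    rw [inner_sub_left]
    have : ⟪G x, y - x⟫ = -⟪G x, x - y⟫ := by rw [← inner_neg_right]; congr 1; abel
    rw [this]; ring
  have e2 : ‖G y - G x‖ = ‖G x - G y‖ := by rw [← norm_neg]; congr 1; abel
  rw [e2] at k1
  have : 2 * (1 / (2 * β)) * ‖G x - G y‖ ^ 2 ≤ ⟪G x - G y, x - y⟫ := by linarith [k1, k2, e1.le, e1.ge]
  have hh : 2 * (1 / (2*β)) = 1/β := by field_simp
  rw [hh] at this
  calc ‖G x - G y‖ ^ 2 = β * (1/β * ‖G x - G y‖ ^ 2) := by field_simp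
    _ ≤ β * ⟪G x - G y, x - y⟫ := by nlinarith [this]


omit [CompleteSpace F] in
lemma inner_expand (a b : F) (t : ℝ) :
    ‖a - t • b‖ ^ 2 = ‖a‖ ^ 2 - 2 * t * ⟪a, b⟫ + t ^ 2 * ‖b‖ ^ 2 := by
  simp only [← real_inner_self_eq_norm_sq, inner_sub_left, inner_sub_right,
    real_inner_smul_left, real_inner_smul_right]
  rw [real_inner_comm b a]
  ring

omit [CompleteSpace F] in
lemma monotone_grad {h : F → ℝ} {G : F → F}
    (hLB : ∀ a b, h a + ⟪G a, b - a⟫ ≤ h b) (x y : F) :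
    0 ≤ ⟪G x - G y, x - y⟫ := by
  have h1 := hLB x y
  have h2 := hLB y x
  have e1 : ⟪G x, y - x⟫ = -⟪G x, x - y⟫ := by rw [← inner_neg_right]; congr 1; abel
  rw [inner_sub_left]
  rw [e1] at h1
  linarith

lemma hasGradientAt_half_mul_norm_sq (μ : ℝ) (x : F) :
    HasGradientAt (fun x : F => μ / 2 * ‖x‖ ^ 2) (μ • x) x := by
  rw [hasGradientAt_iff_hasFDerivAt]
  have h1 : HasFDerivAt (fun x : F => ‖x‖ ^ 2) (2 • (innerSL ℝ x)) x :=
    (hasFDerivAt_id x).norm_sq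
  have h2 := h1.const_mul (μ / 2)
  refine h2.congr_fderiv ?_
  ext y
  simp [real_inner_smul_left, two_smul]
  ring

omit [CompleteSpace F] in
/-- quadratic expansion -/
lemma q_expand (μ : ℝ) (a b : F) :
    μ / 2 * ‖b‖ ^ 2 - μ / 2 * ‖a‖ ^ 2 - ⟪μ • a, b - a⟫ = μ / 2 * ‖b - a‖ ^ 2 := by
  simp only [← real_inner_self_eq_norm_sq, inner_sub_left, inner_sub_right,
    real_inner_smul_left]
  rw [real_inner_comm b a]
  ring

/-- The gradient-step map is a contraction. -/
lemma grad_step_contraction {f : F → ℝ} {g : F → F} {μ L α : ℝ}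
    (hμ : 0 < μ) (hμL : μ ≤ L) (hα0 : 0 < α)
    (hgrad : ∀ x, HasGradientAt f (g x) x)
    (hstrong : ConvexOn ℝ Set.univ (fun x => f x - μ / 2 * ‖x‖ ^ 2))
    (hLip : ∀ a b, ‖g a - g b‖ ≤ L * ‖a - b‖) (x y : F) :
    ‖(x - α • g x) - (y - α • g y)‖ ^ 2
      ≤ max ((1 - α * μ) ^ 2) ((1 - α * L) ^ 2) * ‖x - y‖ ^ 2 := by
  have hL : 0 < L := lt_of_lt_of_le hμ hμL
  have hGh' : ∀ a : F, HasGradientAt (fun x => f x - μ / 2 * ‖x‖ ^ 2) (g a - μ • a) a := by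
    intro a
    rw [hasGradientAt_iff_hasFDerivAt]
    have h1 := hasGradientAt_iff_hasFDerivAt.1 (hgrad a)
    have h2 := hasGradientAt_iff_hasFDerivAt.1 (hasGradientAt_half_mul_norm_sq (F := F) μ a)
    have := h1.sub h2
    exact this.congr_fderiv (by rw [map_sub])
  have hLBh : ∀ a b : F, (f a - μ / 2 * ‖a‖ ^ 2) + ⟪g a - μ • a, b - a⟫ ≤ f b - μ / 2 * ‖b‖ ^ 2 :=
    fun a b => convex_first_order hstrong hGh' a b
  have hLBf : ∀ a b : F, f a + ⟪g a, b - a⟫ ≤ f b := by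
    intro a b
    have h1 := hLBh a b
    have h2 := q_expand (F := F) μ a b
    have h3 : (0:ℝ) ≤ μ / 2 * ‖b - a‖ ^ 2 := by positivity
    rw [inner_sub_left] at h1
    linarith
  have hUBf : ∀ a b : F, f b ≤ f a + ⟪g a, b - a⟫ + L / 2 * ‖b - a‖ ^ 2 := fun a b =>
    descent_lemma hgrad hLip a b
  have hUBh : ∀ a b : F, (f b - μ / 2 * ‖b‖ ^ 2)
      ≤ (f a - μ / 2 * ‖a‖ ^ 2) + ⟪g a - μ • a, b - a⟫ + (L - μ) / 2 * ‖b - a‖ ^ 2 := by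
    intro a b
    have h1 := hUBf a b
    have h2 := q_expand (F := F) μ a b
    rw [inner_sub_left]
    linarith
  -- scalar abbreviations as equations
  have hdiff : (g x - μ • x) - (g y - μ • y) = (g x - g y) - μ • (x - y) := by
    rw [smul_sub]; abel
  -- strong monotonicity
  have hmono : μ * ‖x - y‖ ^ 2 ≤ ⟪g x - g y, x - y⟫ := by
    have h4 := monotone_grad hLBh x y
    rw [hdiff, inner_sub_left, real_inner_smul_left, real_inner_self_eq_norm_sq] at h4
    linarith
  have hE0 : (0:ℝ) ≤ ‖x - y‖ ^ 2 := by positivity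
  have hc0 : (0:ℝ) ≤ ⟪g x - g y, x - y⟫ := le_trans (by positivity) hmono
  -- interpolation
  have hinterp : ‖g x - g y‖ ^ 2 + μ * L * ‖x - y‖ ^ 2 ≤ (μ + L) * ⟪g x - g y, x - y⟫ := by
    rcases eq_or_lt_of_le hμL with hEq | hLt
    · have hco := cocoercive hL hLBf hUBf x y
      subst hEq
      nlinarith [hmono, hco]
    · have hco := cocoercive (by linarith : (0:ℝ) < L - μ) hLBh hUBh x y
      rw [hdiff, inner_sub_left, real_inner_smul_left, real_inner_self_eq_norm_sq,
        inner_expand] at hco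
      nlinarith [hco]
  -- Cauchy-Schwarz
  have hCS : ⟪g x - g y, x - y⟫ ^ 2 ≤ ‖g x - g y‖ ^ 2 * ‖x - y‖ ^ 2 := by
    have h1 := real_inner_le_norm (g x - g y) (x - y)
    nlinarith [h1, hc0, norm_nonneg (g x - g y), norm_nonneg (x - y)]
  -- expansion of the goal
  have hgoal : ‖(x - α • g x) - (y - α • g y)‖ ^ 2
      = ‖x - y‖ ^ 2 - 2 * α * ⟪g x - g y, x - y⟫ + α ^ 2 * ‖g x - g y‖ ^ 2 := by
    have heq : (x - α • g x) - (y - α • g y) = (x - y) - α • (g x - g y) := by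
      rw [smul_sub]; abel
    rw [heq, inner_expand, real_inner_comm]
  rw [hgoal]
  rcases le_or_gt (α * (μ + L)) 2 with hcase | hcase
  · calc ‖x - y‖ ^ 2 - 2 * α * ⟪g x - g y, x - y⟫ + α ^ 2 * ‖g x - g y‖ ^ 2
        ≤ (1 - α * μ) ^ 2 * ‖x - y‖ ^ 2 := by
          nlinarith [hinterp, hmono, mul_nonneg (mul_nonneg hα0.le
            (by linarith : (0:ℝ) ≤ 2 - α * (μ + L)))
            (by linarith : (0:ℝ) ≤ ⟪g x - g y, x - y⟫ - μ * ‖x - y‖ ^ 2)]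
      _ ≤ max ((1 - α * μ) ^ 2) ((1 - α * L) ^ 2) * ‖x - y‖ ^ 2 :=
          mul_le_mul_of_nonneg_right (le_max_left _ _) hE0
  · have hprod : (⟪g x - g y, x - y⟫ - μ * ‖x - y‖ ^ 2) * (⟪g x - g y, x - y⟫ - L * ‖x - y‖ ^ 2) ≤ 0 := by
      nlinarith [hCS, mul_nonneg hE0 (by linarith :
        (0:ℝ) ≤ (μ + L) * ⟪g x - g y, x - y⟫ - ‖g x - g y‖ ^ 2 - μ * L * ‖x - y‖ ^ 2)]
    have hcL : ⟪g x - g y, x - y⟫ ≤ L * ‖x - y‖ ^ 2 := by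
      nlinarith [hprod, hmono, mul_nonneg hE0 (by linarith : (0:ℝ) ≤ L - μ)]
    calc ‖x - y‖ ^ 2 - 2 * α * ⟪g x - g y, x - y⟫ + α ^ 2 * ‖g x - g y‖ ^ 2
        ≤ (1 - α * L) ^ 2 * ‖x - y‖ ^ 2 := by
          nlinarith [hinterp, hcL, mul_nonneg (mul_nonneg hα0.le
            (by linarith : (0:ℝ) ≤ α * (μ + L) - 2))
            (by linarith : (0:ℝ) ≤ L * ‖x - y‖ ^ 2 - ⟪g x - g y, x - y⟫)]
      _ ≤ max ((1 - α * μ) ^ 2) ((1 - α * L) ^ 2) * ‖x - y‖ ^ 2 :=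
          mul_le_mul_of_nonneg_right (le_max_right _ _) hE0


lemma prox_strong {α : ℝ} (hα0 : 0 < α) {r : F → ℝ} (hrconv : ConvexOn ℝ Set.univ r)
    {prox : F → F}
    (hprox : ∀ y w, α * r (prox y) + 1 / 2 * ‖prox y - y‖ ^ 2
        ≤ α * r w + 1 / 2 * ‖w - y‖ ^ 2) (y w : F) :
    α * r (prox y) + 1 / 2 * ‖prox y - y‖ ^ 2 + 1 / 2 * ‖w - prox y‖ ^ 2
      ≤ α * r w + 1 / 2 * ‖w - y‖ ^ 2 := by
  set P := prox y with hP
  have key : 0 ≤ α * (r w - r P) + ⟪P - y, w - P⟫ := by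
    have step : ∀ t : ℝ, 0 < t → t ≤ 1 →
        0 ≤ α * (r w - r P) + ⟪P - y, w - P⟫ + t / 2 * ‖w - P‖ ^ 2 := by
      intro t ht0 ht1
      have hcvx := hrconv.2 (Set.mem_univ P) (Set.mem_univ w)
        (by linarith : (0:ℝ) ≤ 1 - t) ht0.le (by ring)
      have hcombo : (1 - t) • P + t • w = P + t • (w - P) := by
        rw [smul_sub, sub_smul, one_smul]; abel
      rw [hcombo] at hcvx
      simp only [smul_eq_mul] at hcvx
      have hnorm : ‖P + t • (w - P) - y‖ ^ 2
          = ‖P - y‖ ^ 2 + 2 * t * ⟪P - y, w - P⟫ + t ^ 2 * ‖w - P‖ ^ 2 := by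
        have : P + t • (w - P) - y = (P - y) + t • (w - P) := by abel
        rw [this, norm_add_sq_real, real_inner_smul_right, norm_smul]
        simp [abs_of_pos ht0, mul_pow]
        ring
      have happ := hprox y (P + t • (w - P))
      rw [hnorm] at happ
      have := happ
      nlinarith [this, hcvx, ht0, mul_le_mul_of_nonneg_left hcvx (le_of_lt hα0)]
    by_contra hcon
    push_neg at hcon
    set δ := -(α * (r w - r P) + ⟪P - y, w - P⟫) with hδ
    have hδ0 : 0 < δ := by simp only [hδ]; linarith
    rcases eq_or_lt_of_le (by positivity : (0:ℝ) ≤ ‖w - P‖ ^ 2) with hwp | hwp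
    · have := step 1 one_pos le_rfl
      rw [← hwp] at this
      simp at this
      linarith
    · set t := min 1 (δ / ‖w - P‖ ^ 2) with htdef
      have ht0 : 0 < t := lt_min one_pos (by positivity)
      have ht1 : t ≤ 1 := min_le_left _ _
      have htb : t * ‖w - P‖ ^ 2 ≤ δ := by
        calc t * ‖w - P‖ ^ 2 ≤ (δ / ‖w - P‖ ^ 2) * ‖w - P‖ ^ 2 :=
              mul_le_mul_of_nonneg_right (min_le_right _ _) (by positivity)
          _ = δ := by rw [div_mul_cancel₀ _ hwp.ne']
      have := step t ht0 ht1
      have : (0:ℝ) ≤ -δ + t / 2 * ‖w - P‖ ^ 2 := by simp only [hδ] at this ⊢; linarith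
      linarith
  have hexp : ‖w - y‖ ^ 2 = ‖w - P‖ ^ 2 + 2 * ⟪w - P, P - y⟫ + ‖P - y‖ ^ 2 := by
    have : w - y = (w - P) + (P - y) := by abel
    rw [this, norm_add_sq_real]
  rw [real_inner_comm] at key
  rw [hexp]
  linarith

lemma prox_nonexpansive {α : ℝ} (hα0 : 0 < α) {r : F → ℝ} (hrconv : ConvexOn ℝ Set.univ r)
    {prox : F → F}
    (hprox : ∀ y w, α * r (prox y) + 1 / 2 * ‖prox y - y‖ ^ 2
        ≤ α * r w + 1 / 2 * ‖w - y‖ ^ 2) (y y' : F) :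
    ‖prox y - prox y'‖ ^ 2 ≤ ‖y - y'‖ ^ 2 := by
  have h1 := prox_strong hα0 hrconv hprox y (prox y')
  have h2 := prox_strong hα0 hrconv hprox y' (prox y)
  have hfirm : ‖prox y - prox y'‖ ^ 2 ≤ ⟪prox y - prox y', y - y'⟫ := by
    have c1 : ⟪prox y', prox y⟫ = ⟪prox y, prox y'⟫ := real_inner_comm _ _
    simp only [norm_sub_sq_real, inner_sub_left, inner_sub_right] at h1 h2 ⊢
    linarith [h1, h2, c1.le, c1.ge]
  have hcs : ⟪prox y - prox y', y - y'⟫ ≤ ‖prox y - prox y'‖ * ‖y - y'‖ :=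
    real_inner_le_norm _ _
  rcases eq_or_lt_of_le (norm_nonneg (prox y - prox y')) with h0 | h0
  · have h00 : ‖prox y - prox y'‖ ^ 2 = 0 := by rw [← h0]; ring
    rw [h00]; positivity
  · have hle : ‖prox y - prox y'‖ ≤ ‖y - y'‖ := by nlinarith [hfirm, hcs, h0]
    nlinarith [hle, norm_nonneg (prox y - prox y')]


end ConvexAnalysis

section MatAlg
local notation "⟪" x ", " y "⟫" => @inner ℝ _ _ x y
variable {n d : ℕ}

def ipm (a b : Mat n d) : ℝ := ∑ i, ⟪a i, b i⟫

lemma fro2_eq_ipm (a : Mat n d) : fro2 a = ipm a a := by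
  unfold fro2 ipm
  congr 1; ext i; rw [real_inner_self_eq_norm_sq]

lemma ipm_comm (a b : Mat n d) : ipm a b = ipm b a := by
  unfold ipm; congr 1; ext i; rw [real_inner_comm]

lemma ipm_add_left (a b c : Mat n d) : ipm (a + b) c = ipm a c + ipm b c := by
  unfold ipm; rw [← Finset.sum_add_distrib]; congr 1; ext i
  simp [inner_add_left]

lemma ipm_sub_left (a b c : Mat n d) : ipm (a - b) c = ipm a c - ipm b c := by
  unfold ipm; rw [← Finset.sum_sub_distrib]; congr 1; ext i
  simp [inner_sub_left]

lemma ipm_sub_right (a b c : Mat n d) : ipm a (b - c) = ipm a b - ipm a c := by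
  rw [ipm_comm, ipm_sub_left, ipm_comm b a, ipm_comm c a]

lemma ipm_add_right (a b c : Mat n d) : ipm a (b + c) = ipm a b + ipm a c := by
  rw [ipm_comm, ipm_add_left, ipm_comm b a, ipm_comm c a]

lemma ipm_smul_left (t : ℝ) (a b : Mat n d) : ipm (t • a) b = t * ipm a b := by
  unfold ipm
  rw [Finset.mul_sum]
  exact Finset.sum_congr rfl fun i _ => real_inner_smul_left _ _ _

lemma ipm_smul_right (t : ℝ) (a b : Mat n d) : ipm a (t • b) = t * ipm a b := by
  rw [ipm_comm, ipm_smul_left, ipm_comm b a]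

lemma fro2_nonneg (a : Mat n d) : 0 ≤ fro2 a :=
  Finset.sum_nonneg fun i _ => by positivity

lemma fro2_add (a b : Mat n d) : fro2 (a + b) = fro2 a + 2 * ipm a b + fro2 b := by
  rw [fro2_eq_ipm, fro2_eq_ipm, fro2_eq_ipm, ipm_add_left, ipm_add_right, ipm_add_right,
    ipm_comm b a]; ring

lemma fro2_sub (a b : Mat n d) : fro2 (a - b) = fro2 a - 2 * ipm a b + fro2 b := by
  rw [fro2_eq_ipm, fro2_eq_ipm, fro2_eq_ipm, ipm_sub_left, ipm_sub_right, ipm_sub_right,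
    ipm_comm b a]; ring

lemma fro2_smul (t : ℝ) (a : Mat n d) : fro2 (t • a) = t ^ 2 * fro2 a := by
  rw [fro2_eq_ipm, fro2_eq_ipm, ipm_smul_left, ipm_smul_right]; ring

-- matMul linearity
lemma matMul_sub (S : Matrix (Fin n) (Fin n) ℝ) (a b : Mat n d) :
    matMul S (a - b) = matMul S a - matMul S b := by
  funext i; simp [matMul, smul_sub, Finset.sum_sub_distrib]

lemma matMul_add (S : Matrix (Fin n) (Fin n) ℝ) (a b : Mat n d) :
    matMul S (a + b) = matMul S a + matMul S b := by
  funext i; simp [matMul, smul_add, Finset.sum_add_distrib]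

lemma matMul_smul (S : Matrix (Fin n) (Fin n) ℝ) (t : ℝ) (a : Mat n d) :
    matMul S (t • a) = t • matMul S a := by
  funext i; simp [matMul, Finset.smul_sum, smul_comm t]

lemma matMul_zero (S : Matrix (Fin n) (Fin n) ℝ) : matMul S (0 : Mat n d) = 0 := by
  funext i; simp [matMul]

lemma matMul_one (a : Mat n d) : matMul (1 : Matrix (Fin n) (Fin n) ℝ) a = a := by
  funext i; simp [matMul, Matrix.one_apply, ite_smul]

lemma matMul_matSub (A B : Matrix (Fin n) (Fin n) ℝ) (a : Mat n d) :
    matMul (A - B) a = matMul A a - matMul B a := by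
  funext i; simp [matMul, Matrix.sub_apply, sub_smul, Finset.sum_sub_distrib]

lemma matMul_mul (A B : Matrix (Fin n) (Fin n) ℝ) (a : Mat n d) :
    matMul (A * B) a = matMul A (matMul B a) := by
  funext i
  simp only [matMul, Matrix.mul_apply, Finset.smul_sum, Finset.sum_smul, smul_smul]
  rw [Finset.sum_comm]

lemma ipm_matMul_symm {S : Matrix (Fin n) (Fin n) ℝ} (hS : S.IsSymm) (a b : Mat n d) :
    ipm (matMul S a) b = ipm a (matMul S b) := by
  unfold ipm matMul
  simp only [sum_inner, inner_sum, real_inner_smul_left, real_inner_smul_right]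
  rw [Finset.sum_comm]
  congr 1; ext i; congr 1; ext j
  rw [← Matrix.IsSymm.apply hS i j]

lemma ipm_psd {A : Matrix (Fin n) (Fin n) ℝ} (hA : A.PosSemidef) (a : Mat n d) :
    0 ≤ ipm a (matMul A a) := by
  unfold ipm matMul
  have hexp : ∀ i : Fin n, ⟪a i, ∑ j, A i j • a j⟫ = ∑ j, ∑ k, A i j * (a i k * a j k) := by
    intro i
    rw [inner_sum]
    congr 1; ext j
    rw [real_inner_smul_right, PiLp.inner_apply, Finset.mul_sum]
    refine Finset.sum_congr rfl fun k _ => ?_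
    rw [RCLike.inner_apply, starRingEnd_apply, star_trivial]; ring
  rw [Finset.sum_congr rfl (fun i _ => hexp i)]
  have hswap : ∑ i : Fin n, ∑ j : Fin n, ∑ k : Fin d, A i j * (a i k * a j k)
      = ∑ k : Fin d, ∑ i : Fin n, ∑ j : Fin n, A i j * (a i k * a j k) := by
    calc ∑ i : Fin n, ∑ j : Fin n, ∑ k : Fin d, A i j * (a i k * a j k)
        = ∑ i : Fin n, ∑ k : Fin d, ∑ j : Fin n, A i j * (a i k * a j k) :=
          Finset.sum_congr rfl (fun i _ => by rw [Finset.sum_comm])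
      _ = ∑ k : Fin d, ∑ i : Fin n, ∑ j : Fin n, A i j * (a i k * a j k) := by
          rw [Finset.sum_comm]
  rw [hswap]
  apply Finset.sum_nonneg
  intro k _
  have := hA.dotProduct_mulVec_nonneg (fun i => a i k)
  simp only [dotProduct, Matrix.mulVec, dotProduct] at this
  convert this using 1
  simp only [star_trivial]
  exact Finset.sum_congr rfl (fun i _ => by rw [Finset.mul_sum]; exact Finset.sum_congr rfl (fun j _ => by ring))

end MatAlg

section MgAux

def zOf {n d : ℕ} (α : ℝ) (g : Fin n → EuclideanSpace ℝ (Fin d) → EuclideanSpace ℝ (Fin d))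
    (S : Matrix (Fin n) (Fin n) ℝ) (xu : Mat n d × Mat n d) : Mat n d :=
  fun i => xu.1 i - α • g i (xu.1 i) - α • matMul S xu.2 i

def stepOf {n d : ℕ} (α p : ℝ) (g : Fin n → EuclideanSpace ℝ (Fin d) → EuclideanSpace ℝ (Fin d))
    (prox : EuclideanSpace ℝ (Fin d) → EuclideanSpace ℝ (Fin d))
    (S : Matrix (Fin n) (Fin n) ℝ) (b : Bool) (xu : Mat n d × Mat n d) : Mat n d × Mat n d :=
  (fun i => prox ((zOf α g S xu - (if b then (1 : ℝ) else 0) • matMul (S * S) (zOf α g S xu)) i),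
    xu.2 + ((if b then (1 : ℝ) else 0) * (p / α)) • matMul S (zOf α g S xu))

variable {n d : ℕ}
variable (α p : ℝ) (g : Fin n → EuclideanSpace ℝ (Fin d) → EuclideanSpace ℝ (Fin d))
  (prox : EuclideanSpace ℝ (Fin d) → EuclideanSpace ℝ (Fin d))
  (S : Matrix (Fin n) (Fin n) ℝ) (x0 : Mat n d)

lemma mgIter_succ (θ : ℕ → Bool) (t : ℕ) :
    mgIter α p g prox S x0 θ (t + 1)
      = stepOf α p g prox S (θ t) (mgIter α p g prox S x0 θ t) := rfl

lemma mgIter_congr (θ₁ θ₂ : ℕ → Bool) :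
    ∀ t : ℕ, (∀ s, s < t → θ₁ s = θ₂ s) →
      mgIter α p g prox S x0 θ₁ t = mgIter α p g prox S x0 θ₂ t := by
  intro t
  induction t with
  | zero => intro _; rfl
  | succ t ih =>
    intro hag
    rw [mgIter_succ, mgIter_succ, ih (fun s hs => hag s (Nat.lt_succ_of_lt hs)),
      hag t (Nat.lt_succ_self t)]

lemma mgIter_snd_range (θ : ℕ → Bool) (t : ℕ) :
    ∃ V : Mat n d, (mgIter α p g prox S x0 θ t).2 = matMul S V := by
  induction t with
  | zero => exact ⟨0, by rw [matMul_zero]; rfl⟩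
  | succ t ih =>
    obtain ⟨V, hV⟩ := ih
    rw [mgIter_succ]
    refine ⟨V + ((if θ t then (1:ℝ) else 0) * (p / α)) • zOf α g S (mgIter α p g prox S x0 θ t), ?_⟩
    show (mgIter α p g prox S x0 θ t).2 + _ = _
    rw [matMul_add, matMul_smul, hV]

end MgAux

/-- One-step expected contraction. -/
lemma one_step {n d : ℕ} {μ L α p : ℝ}
    (hμ : 0 < μ) (hμL : μ ≤ L) (hα0 : 0 < α) (hp0 : 0 < p) (hp1 : p ≤ 1)
    {f : Fin n → EuclideanSpace ℝ (Fin d) → ℝ}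
    {g : Fin n → EuclideanSpace ℝ (Fin d) → EuclideanSpace ℝ (Fin d)}
    (hgrad : ∀ i x, HasGradientAt (f i) (g i x) x)
    (hstrong : ∀ i, ConvexOn ℝ Set.univ (fun x => f i x - μ / 2 * ‖x‖ ^ 2))
    (hLip : ∀ i a b, ‖g i a - g i b‖ ≤ L * ‖a - b‖)
    {r : EuclideanSpace ℝ (Fin d) → ℝ} (hrconv : ConvexOn ℝ Set.univ r)
    {prox : EuclideanSpace ℝ (Fin d) → EuclideanSpace ℝ (Fin d)}
    (hprox : ∀ y w, α * r (prox y) + 1 / 2 * ‖prox y - y‖ ^ 2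
        ≤ α * r w + 1 / 2 * ‖w - y‖ ^ 2)
    {S : Matrix (Fin n) (Fin n) ℝ} (hSsymm : S.IsSymm) (hISS : (1 - S * S).PosSemidef)
    (hS5 : ∀ W : Mat n d, (∃ V : Mat n d, W = matMul S V) →
        (1 / 5) * fro2 W ≤ fro2 (matMul S W))
    {xstar zstar ustar : Mat n d}
    (hucol : ∃ V : Mat n d, ustar = matMul S V)
    (hzstar : ∀ i, zstar i = xstar i - α • g i (xstar i) - α • matMul S ustar i)
    (hSz : matMul S zstar = 0)
    (hxstar : ∀ i, xstar i = prox (zstar i))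
    (xu : Mat n d × Mat n d) (hu : ∃ V : Mat n d, xu.2 = matMul S V) :
    p * (fro2 ((stepOf α p g prox S true xu).1 - xstar)
          + α ^ 2 / p ^ 2 * fro2 ((stepOf α p g prox S true xu).2 - ustar))
      + (1 - p) * (fro2 ((stepOf α p g prox S false xu).1 - xstar)
          + α ^ 2 / p ^ 2 * fro2 ((stepOf α p g prox S false xu).2 - ustar))
      ≤ (max (max ((1 - α * μ) ^ 2) ((1 - α * L) ^ 2)) (1 - p ^ 2 / 5)) *
          (fro2 (xu.1 - xstar) + α ^ 2 / p ^ 2 * fro2 (xu.2 - ustar)) := by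
  obtain ⟨x, u⟩ := xu
  set ζ := max (max ((1 - α * μ) ^ 2) ((1 - α * L) ^ 2)) (1 - p ^ 2 / 5) with hζ
  set z : Mat n d := zOf α g S (x, u) with hz
  set zh : Mat n d := z - zstar with hzh
  set uh : Mat n d := u - ustar with huh
  set v : Mat n d := fun i => (x i - α • g i (x i)) - (xstar i - α • g i (xstar i)) with hv
  -- z - zstar = v - α • S uh
  have hzv : zh = v - α • matMul S uh := by
    funext i
    simp only [hzh, hz, huh, hv, Pi.sub_apply, Pi.smul_apply, zOf, hzstar i, matMul_sub]
    rw [smul_sub]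
    abel
  have hSzzh : matMul S z = matMul S zh := by
    rw [hzh, matMul_sub, hSz, sub_zero]
  have hSSzstar : matMul (S * S) zstar = 0 := by
    rw [matMul_mul, hSz, matMul_zero]
  -- the four component bounds
  have hfalse1 : fro2 ((stepOf α p g prox S false (x, u)).1 - xstar) ≤ fro2 zh := by
    have hstep : (stepOf α p g prox S false (x, u)).1 = fun i => prox (z i) := by
      funext i
      simp [stepOf, hz]
    rw [hstep, hzh]
    unfold fro2
    apply Finset.sum_le_sum
    intro i _
    have := prox_nonexpansive hα0 hrconv hprox (z i) (zstar i)
    rw [← hxstar i] at this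
    simpa using this
  have hfalse2 : (stepOf α p g prox S false (x, u)).2 - ustar = uh := by
    simp only [stepOf, Bool.false_eq_true, if_false, zero_mul, zero_smul, add_zero, huh]
  have htrue1 : fro2 ((stepOf α p g prox S true (x, u)).1 - xstar)
      ≤ fro2 (zh - matMul S (matMul S zh)) := by
    have hstep : (stepOf α p g prox S true (x, u)).1
        = fun i => prox ((z - matMul (S * S) z) i) := by
      funext i
      simp [stepOf, hz]
    rw [hstep]
    have hx2 : ∀ i, xstar i = prox ((zstar - matMul (S * S) zstar) i) := by
      intro i
      rw [hSSzstar]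
      simpa using hxstar i
    have heq : (z - matMul (S * S) z) - (zstar - matMul (S * S) zstar)
        = zh - matMul S (matMul S zh) := by
      rw [← matMul_mul, hzh, matMul_sub]
      abel
    unfold fro2
    apply Finset.sum_le_sum
    intro i _
    have := prox_nonexpansive hα0 hrconv hprox ((z - matMul (S * S) z) i)
      ((zstar - matMul (S * S) zstar) i)
    rw [← hx2 i] at this
    calc ‖prox ((z - matMul (S * S) z) i) - xstar i‖ ^ 2
        ≤ ‖(z - matMul (S * S) z) i - (zstar - matMul (S * S) zstar) i‖ ^ 2 := this
      _ = ‖(zh - matMul S (matMul S zh)) i‖ ^ 2 := by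
          rw [show (z - matMul (S * S) z) i - (zstar - matMul (S * S) zstar) i
            = ((z - matMul (S * S) z) - (zstar - matMul (S * S) zstar)) i from rfl, heq]
  have htrue2 : (stepOf α p g prox S true (x, u)).2 - ustar
      = uh + (p / α) • matMul S zh := by
    simp only [stepOf, if_true, one_mul, huh, ← hz, hSzzh]
    abel
  -- scalar abbreviations
  have hI1 : fro2 (zh - matMul S (matMul S zh))
      = fro2 zh - 2 * fro2 (matMul S zh) + fro2 (matMul S (matMul S zh)) := by
    rw [fro2_sub]
    congr 2
    rw [← ipm_matMul_symm hSsymm, ← fro2_eq_ipm]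
  have hI2 : fro2 (uh + (p / α) • matMul S zh)
      = fro2 uh + 2 * (p / α) * ipm uh (matMul S zh) + (p / α) ^ 2 * fro2 (matMul S zh) := by
    rw [fro2_add, ipm_smul_right, fro2_smul]
    ring
  have hI3 : fro2 (matMul S (matMul S zh)) ≤ fro2 (matMul S zh) := by
    have h0 := ipm_psd hISS (matMul S zh)
    rw [matMul_matSub, matMul_one, ipm_sub_right, ← fro2_eq_ipm, matMul_mul,
      ← ipm_matMul_symm hSsymm (matMul S zh) (matMul S (matMul S zh)), ← fro2_eq_ipm] at h0
    linarith
  have hI4 : fro2 zh = fro2 v - 2 * α * ipm v (matMul S uh) + α ^ 2 * fro2 (matMul S uh) := by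
    rw [hzv, fro2_sub, ipm_smul_right, fro2_smul]
    ring
  have hI5 : ipm uh (matMul S zh) = ipm v (matMul S uh) - α * fro2 (matMul S uh) := by
    rw [← ipm_matMul_symm hSsymm, hzv, ipm_sub_right, ipm_smul_right, ← fro2_eq_ipm,
      ipm_comm (matMul S uh) v]
  have hI6 : (1 / 5) * fro2 uh ≤ fro2 (matMul S uh) := by
    obtain ⟨V, hV⟩ := hu
    obtain ⟨Vst, hVst⟩ := hucol
    refine hS5 uh ⟨V - Vst, ?_⟩
    rw [huh, matMul_sub, ← hV, ← hVst]
  have hI7 : fro2 v ≤ max ((1 - α * μ) ^ 2) ((1 - α * L) ^ 2) * fro2 (x - xstar) := by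
    unfold fro2
    rw [Finset.mul_sum]
    apply Finset.sum_le_sum
    intro i _
    exact grad_step_contraction hμ hμL hα0 (hgrad i) (hstrong i) (hLip i) (x i) (xstar i)
  -- put it together
  set a := fro2 zh
  set b := fro2 uh
  set sz := fro2 (matMul S zh)
  set s2 := fro2 (matMul S (matMul S zh))
  set cu := ipm uh (matMul S zh)
  set fv := fro2 v
  set su := fro2 (matMul S uh)
  set cv := ipm v (matMul S uh)
  set X := fro2 (x - xstar)
  have hbnonneg : 0 ≤ b := fro2_nonneg uh
  have hXnonneg : 0 ≤ X := fro2_nonneg (x - xstar)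
  have hζ1 : max ((1 - α * μ) ^ 2) ((1 - α * L) ^ 2) ≤ ζ := le_max_left _ _
  have hζ2 : 1 - p ^ 2 / 5 ≤ ζ := le_max_right _ _
  have hk1 : α ^ 2 / p ^ 2 * (p / α) ^ 2 = 1 := by
    field_simp
  have hk2 : p * (α ^ 2 / p ^ 2) * (p / α) = α := by
    field_simp
  have hk3 : α ^ 2 / p ^ 2 - α ^ 2 / 5 = α ^ 2 / p ^ 2 * (1 - p ^ 2 / 5) := by
    field_simp
  have hknn : 0 ≤ α ^ 2 / p ^ 2 := by positivity
  calc p * (fro2 ((stepOf α p g prox S true (x, u)).1 - xstar)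
          + α ^ 2 / p ^ 2 * fro2 ((stepOf α p g prox S true (x, u)).2 - ustar))
      + (1 - p) * (fro2 ((stepOf α p g prox S false (x, u)).1 - xstar)
          + α ^ 2 / p ^ 2 * fro2 ((stepOf α p g prox S false (x, u)).2 - ustar))
      ≤ p * ((a - 2 * sz + s2)
          + α ^ 2 / p ^ 2 * (b + 2 * (p / α) * cu + (p / α) ^ 2 * sz))
        + (1 - p) * (a + α ^ 2 / p ^ 2 * b) := by
        rw [htrue2, hfalse2, hI2]
        have hb1 := htrue1
        rw [hI1] at hb1
        refine add_le_add
          (mul_le_mul_of_nonneg_left (add_le_add_left ?_ _) hp0.le)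
          (mul_le_mul_of_nonneg_left (add_le_add_left ?_ _) (by linarith))
        · exact hb1
        · exact hfalse1
    _ ≤ a + α ^ 2 / p ^ 2 * b + 2 * α * cu := by
        have heq : p * ((a - 2 * sz + s2)
              + α ^ 2 / p ^ 2 * (b + 2 * (p / α) * cu + (p / α) ^ 2 * sz))
            + (1 - p) * (a + α ^ 2 / p ^ 2 * b)
            = a + α ^ 2 / p ^ 2 * b + 2 * α * cu + (p * s2 - p * sz) := by
          field_simp
          ring
        have hps : p * s2 ≤ p * sz := mul_le_mul_of_nonneg_left hI3 hp0.le
        linarith [heq.le, heq.ge, hps]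
    _ = fv - α ^ 2 * su + α ^ 2 / p ^ 2 * b := by
        rw [hI4, hI5]
        ring
    _ ≤ fv + α ^ 2 / p ^ 2 * (1 - p ^ 2 / 5) * b := by
        have e3 : α ^ 2 / p ^ 2 * b - α ^ 2 / 5 * b = α ^ 2 / p ^ 2 * (1 - p ^ 2 / 5) * b := by
          field_simp
        have e4 : α ^ 2 * (1 / 5 * b) ≤ α ^ 2 * su :=
          mul_le_mul_of_nonneg_left hI6 (sq_nonneg α)
        have e5 : α ^ 2 * (1 / 5 * b) = α ^ 2 / 5 * b := by ring
        linarith [e3.le, e3.ge, e4, e5.le, e5.ge]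
    _ ≤ ζ * X + ζ * (α ^ 2 / p ^ 2 * b) := by
        have t1 : fv ≤ ζ * X := le_trans hI7 (mul_le_mul_of_nonneg_right hζ1 hXnonneg)
        have t2 : α ^ 2 / p ^ 2 * (1 - p ^ 2 / 5) * b ≤ ζ * (α ^ 2 / p ^ 2 * b) := by
          have h6 : 0 ≤ (ζ - (1 - p ^ 2 / 5)) * (α ^ 2 / p ^ 2) * b :=
            mul_nonneg (mul_nonneg (sub_nonneg.2 hζ2) hknn) hbnonneg
          nlinarith [h6]
        linarith [t1, t2]
    _ = ζ * (X + α ^ 2 / p ^ 2 * b) := by ring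


/-- **Theorem 1 (linear convergence in expectation of MG-Skip).** -/
theorem mgSkip_linear_convergence
    (n d : ℕ) (hn : 1 ≤ n) (hd : 1 ≤ d)
    (μ L α p : ℝ) (hμ : 0 < μ) (hμL : μ ≤ L)
    (hα0 : 0 < α) (hα : α < 2 / L) (hp0 : 0 < p) (hp1 : p ≤ 1)
    (f : Fin n → EuclideanSpace ℝ (Fin d) → ℝ)
    (g : Fin n → EuclideanSpace ℝ (Fin d) → EuclideanSpace ℝ (Fin d))
    (hgrad : ∀ i x, HasGradientAt (f i) (g i x) x)
    (hstrong : ∀ i, ConvexOn ℝ Set.univ (fun x => f i x - μ / 2 * ‖x‖ ^ 2))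
    (hsmooth : ∀ i, LipschitzWith L.toNNReal (g i))
    (r : EuclideanSpace ℝ (Fin d) → ℝ)
    (hrconv : ConvexOn ℝ Set.univ r) (hrcont : Continuous r)
    (prox : EuclideanSpace ℝ (Fin d) → EuclideanSpace ℝ (Fin d))
    (hprox : ∀ y w, α * r (prox y) + 1 / 2 * ‖prox y - y‖ ^ 2
        ≤ α * r w + 1 / 2 * ‖w - y‖ ^ 2)
    (S : Matrix (Fin n) (Fin n) ℝ)
    (hSsymm : S.IsSymm) (hSpsd : S.PosSemidef)
    (hISS : (1 - S * S).PosSemidef)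
    (hS5 : ∀ W : Mat n d, (∃ V : Mat n d, W = matMul S V) →
        (1 / 5) * fro2 W ≤ fro2 (matMul S W))
    (xstar zstar ustar : Mat n d)
    (hucol : ∃ V : Mat n d, ustar = matMul S V)
    (hzstar : ∀ i, zstar i = xstar i - α • g i (xstar i) - α • matMul S ustar i)
    (hSz : matMul S zstar = 0)
    (hxstar : ∀ i, xstar i = prox (zstar i))
    (x0 : Mat n d) :
    ∀ T : ℕ,
      ∑ θ : Fin T → Bool,
          (∏ t, if θ t then p else 1 - p) *
            fro2 ((mgIter α p g prox S x0
                (fun t => if h : t < T then θ ⟨t, h⟩ else false) T).1 - xstar)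
        ≤ (max (max ((1 - α * μ) ^ 2) ((1 - α * L) ^ 2)) (1 - p ^ 2 / 5)) ^ T *
            (fro2 (x0 - xstar) + α ^ 2 / p ^ 2 * fro2 ((0 : Mat n d) - ustar)) := by
  have hL : 0 < L := lt_of_lt_of_le hμ hμL
  have hLip : ∀ i a b, ‖g i a - g i b‖ ≤ L * ‖a - b‖ := by
    intro i a b
    have h1 := (hsmooth i).dist_le_mul a b
    rwa [dist_eq_norm, dist_eq_norm, Real.coe_toNNReal L hL.le] at h1
  set ζ := max (max ((1 - α * μ) ^ 2) ((1 - α * L) ^ 2)) (1 - p ^ 2 / 5) with hζ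
  have hζ0 : 0 ≤ ζ := by
    have : 1 - p ^ 2 / 5 ≤ ζ := le_max_right _ _
    nlinarith [hp1, hp0.le]
  have hκ : (0:ℝ) ≤ α ^ 2 / p ^ 2 := by positivity
  -- Lyapunov function
  set Ψ : Mat n d × Mat n d → ℝ :=
    fun xu => fro2 (xu.1 - xstar) + α ^ 2 / p ^ 2 * fro2 (xu.2 - ustar) with hΨ
  -- extension of a finite coin sequence
  set ext : ∀ T : ℕ, (Fin T → Bool) → (ℕ → Bool) :=
    fun T θ t => if h : t < T then θ ⟨t, h⟩ else false with hext
  have claim : ∀ T : ℕ,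
      ∑ θ : Fin T → Bool, (∏ t, if θ t then p else 1 - p) *
          Ψ (mgIter α p g prox S x0 (ext T θ) T)
        ≤ ζ ^ T * Ψ (x0, (0 : Mat n d)) := by
    intro T
    induction T with
    | zero =>
      rw [pow_zero, one_mul]
      rw [Finset.sum_eq_single_of_mem (fun _ : Fin 0 => false) (Finset.mem_univ _)
        (fun b _ hb => absurd (funext fun i => absurd i.2 (Nat.not_lt_zero i.1)) hb)]
      simp [mgIter]
    | succ T ih =>
      -- reindex the sum using snoc
      rw [← Equiv.sum_comp (Fin.snocEquiv (fun _ : Fin (T+1) => Bool))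
        (fun θ : Fin (T+1) → Bool => (∏ t, if θ t then p else 1 - p) *
          Ψ (mgIter α p g prox S x0 (ext (T+1) θ) (T+1)))]
      rw [Fintype.sum_prod_type]
      rw [Finset.sum_comm]
      have key : ∀ θ' : Fin T → Bool, ∀ b : Bool,
          (∏ t, if (Fin.snocEquiv (fun _ : Fin (T+1) => Bool)) (b, θ') t then p else 1 - p) *
            Ψ (mgIter α p g prox S x0 (ext (T+1) ((Fin.snocEquiv (fun _ => Bool)) (b, θ'))) (T+1))
          = ((∏ t, if θ' t then p else 1 - p) * (if b then p else 1 - p)) *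
            Ψ (stepOf α p g prox S b (mgIter α p g prox S x0 (ext T θ') T)) := by
        intro θ' b
        have hsnoc : ∀ i : Fin T,
            (Fin.snocEquiv (fun _ : Fin (T+1) => Bool)) (b, θ') i.castSucc = θ' i := by
          intro i; simp [Fin.snocEquiv]
        have hlast : (Fin.snocEquiv (fun _ : Fin (T+1) => Bool)) (b, θ') (Fin.last T) = b := by
          simp [Fin.snocEquiv]
        congr 1
        · rw [Fin.prod_univ_castSucc]
          congr 1
          · exact Finset.prod_congr rfl fun i _ => by rw [hsnoc i]
          · rw [hlast]
        · -- iterate equality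
          have hcongr : mgIter α p g prox S x0
              (ext (T+1) ((Fin.snocEquiv (fun _ => Bool)) (b, θ'))) T
              = mgIter α p g prox S x0 (ext T θ') T := by
            apply mgIter_congr
            intro s hs
            simp only [hext]
            rw [dif_pos (Nat.lt_succ_of_lt hs), dif_pos hs]
            have : (⟨s, Nat.lt_succ_of_lt hs⟩ : Fin (T+1)) = (⟨s, hs⟩ : Fin T).castSucc := rfl
            rw [this, hsnoc]
          have hTlt : T < T + 1 := Nat.lt_succ_self T
          have hcoin : ext (T+1) ((Fin.snocEquiv (fun _ => Bool)) (b, θ')) T = b := by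
            simp only [hext]
            rw [dif_pos hTlt]
            have : (⟨T, hTlt⟩ : Fin (T+1)) = Fin.last T := rfl
            rw [this, hlast]
          rw [mgIter_succ, hcongr, hcoin]
      calc ∑ θ' : Fin T → Bool, ∑ b : Bool,
            (∏ t, if (Fin.snocEquiv (fun _ : Fin (T+1) => Bool)) (b, θ') t then p else 1 - p) *
              Ψ (mgIter α p g prox S x0
                (ext (T+1) ((Fin.snocEquiv (fun _ => Bool)) (b, θ'))) (T+1))
          = ∑ θ' : Fin T → Bool, (∏ t, if θ' t then p else 1 - p) *
              (p * Ψ (stepOf α p g prox S true (mgIter α p g prox S x0 (ext T θ') T))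
                + (1 - p) * Ψ (stepOf α p g prox S false
                    (mgIter α p g prox S x0 (ext T θ') T))) := by
            refine Finset.sum_congr rfl fun θ' _ => ?_
            rw [Fintype.sum_bool, key θ' true, key θ' false]
            simp only [if_true, Bool.false_eq_true, if_false]
            ring
        _ ≤ ∑ θ' : Fin T → Bool, (∏ t, if θ' t then p else 1 - p) *
              (ζ * Ψ (mgIter α p g prox S x0 (ext T θ') T)) := by
            refine Finset.sum_le_sum fun θ' _ => ?_
            refine mul_le_mul_of_nonneg_left ?_
              (Finset.prod_nonneg fun t _ => by split <;> linarith)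
            exact one_step hμ hμL hα0 hp0 hp1 hgrad hstrong hLip hrconv hprox hSsymm hISS
              hS5 hucol hzstar hSz hxstar _ (mgIter_snd_range α p g prox S x0 (ext T θ') T)
        _ = ζ * ∑ θ' : Fin T → Bool, (∏ t, if θ' t then p else 1 - p) *
              Ψ (mgIter α p g prox S x0 (ext T θ') T) := by
            rw [Finset.mul_sum]
            exact Finset.sum_congr rfl fun θ' _ => by ring
        _ ≤ ζ * (ζ ^ T * Ψ (x0, (0 : Mat n d))) := mul_le_mul_of_nonneg_left ih hζ0
        _ = ζ ^ (T + 1) * Ψ (x0, (0 : Mat n d)) := by ring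
  intro T
  calc ∑ θ : Fin T → Bool, (∏ t, if θ t then p else 1 - p) *
        fro2 ((mgIter α p g prox S x0 (ext T θ) T).1 - xstar)
      ≤ ∑ θ : Fin T → Bool, (∏ t, if θ t then p else 1 - p) *
        Ψ (mgIter α p g prox S x0 (ext T θ) T) := by
        refine Finset.sum_le_sum fun θ _ => ?_
        refine mul_le_mul_of_nonneg_left ?_
          (Finset.prod_nonneg fun t _ => by split <;> linarith)
        have := fro2_nonneg ((mgIter α p g prox S x0 (ext T θ) T).2 - ustar)
        simp only [hΨ]
        nlinarith [hκ, this]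
    _ ≤ ζ ^ T * Ψ (x0, (0 : Mat n d)) := claim T
    _ = ζ ^ T * (fro2 (x0 - xstar) + α ^ 2 / p ^ 2 * fro2 ((0 : Mat n d) - ustar)) := rfl
end
end

section
/- Fix integers n ≥ 1, d ≥ 1 and a stepsize α > 0. For i = 1,…,n let f_i : ℝ^d → ℝ be convex and differentiable, and let r : ℝ^d → ℝ be convex. Let S be an n×n real symmetric matrix such that, for every n×d real matrix z, S·z = 0 if and only if all rows of z are equal. Suppose n×d real matrices (x★, z★, u★) satisfy, writing a_i for the i-th row: (z★)_i = (x★)_i − α·∇f_i((x★)_i) − α·(S·u★)_i for every i; S·z★ = 0; and for every i, (x★)_i minimizes u ↦ α·r(u) + (1/2)·‖u − (z★)_i‖² over ℝ^d. Then there exists x̄ ∈ ℝ^d such that every row of x★ equals x̄ and x̄ is a global minimizer of h(w) = (1/n)·Σ_{i=1}^n f_i(w) + r(w) over ℝ^d, i.e., (1/n)·Σ_i f_i(x̄) + r(x̄) ≤ (1/n)·Σ_i f_i(w) + r(w) for all w ∈ ℝ^d. -/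
noncomputable section

open RealInnerProductSpace

variable {E : Type*} [NormedAddCommGroup E] [InnerProductSpace ℝ E] [CompleteSpace E]

lemma aux_limit {b c : ℝ} (h : ∀ t : ℝ, 0 < t → t ≤ 1 → 0 ≤ c + t * b) : 0 ≤ c := by
  by_contra hc
  push_neg at hc
  rcases le_or_gt b 0 with hb | hb
  · have := h 1 one_pos le_rfl; nlinarith
  · have hq : 0 < -c / (2 * b) := div_pos (neg_pos.mpr hc) (by positivity)
    have ht1 : 0 < min 1 (-c / (2 * b)) := lt_min one_pos hq
    have := h _ ht1 (min_le_left _ _)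
    have h2 : min 1 (-c / (2 * b)) * b ≤ (-c / (2 * b)) * b :=
      mul_le_mul_of_nonneg_right (min_le_right _ _) hb.le
    have h3 : (-c / (2 * b)) * b = -c / 2 := by field_simp
    nlinarith

lemma aux_prox_unique {α : ℝ} (hα : 0 < α) {r : E → ℝ} (hr : ConvexOn ℝ Set.univ r)
    {z x y : E}
    (hx : ∀ w, α * r x + 1 / 2 * ‖x - z‖ ^ 2 ≤ α * r w + 1 / 2 * ‖w - z‖ ^ 2)
    (hy : ∀ w, α * r y + 1 / 2 * ‖y - z‖ ^ 2 ≤ α * r w + 1 / 2 * ‖w - z‖ ^ 2) :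
    x = y := by
  have hm := hx ((1/2 : ℝ) • x + (1/2 : ℝ) • y)
  have hrm : r ((1/2 : ℝ) • x + (1/2 : ℝ) • y) ≤ (1/2) * r x + (1/2) * r y := by
    have := hr.2 (Set.mem_univ x) (Set.mem_univ y) (by norm_num : (0:ℝ) ≤ 1/2)
      (by norm_num : (0:ℝ) ≤ 1/2) (by norm_num)
    simpa [smul_eq_mul] using this
  have hpar : ‖((1/2 : ℝ) • x + (1/2 : ℝ) • y) - z‖ ^ 2
      = (1/2) * ‖x - z‖^2 + (1/2) * ‖y - z‖^2 - (1/4) * ‖x - y‖^2 := by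
    have hab := parallelogram_law_with_norm ℝ ((1/2 : ℝ) • (x - z)) ((1/2 : ℝ) • (y - z))
    have h1 : (1/2 : ℝ) • (x - z) + (1/2 : ℝ) • (y - z) = ((1/2 : ℝ) • x + (1/2 : ℝ) • y) - z := by
      module
    have h2 : (1/2 : ℝ) • (x - z) - (1/2 : ℝ) • (y - z) = (1/2 : ℝ) • (x - y) := by
      module
    rw [h1, h2, norm_smul, norm_smul, norm_smul] at hab
    simp only [Real.norm_eq_abs] at hab
    rw [abs_of_nonneg (by norm_num : (0:ℝ) ≤ 1/2)] at hab
    nlinarith [hab]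
  have hxy := hy x
  have hyx := hx y
  have h0 : ‖x - y‖ ^ 2 ≤ 0 := by nlinarith
  have h1 : ‖x - y‖ = 0 := by nlinarith [norm_nonneg (x - y), sq_nonneg ‖x - y‖]
  exact sub_eq_zero.mp (norm_eq_zero.mp h1)

lemma aux_prox_subgrad {α : ℝ} (hα : 0 < α) {r : E → ℝ} (hr : ConvexOn ℝ Set.univ r)
    {z x : E}
    (hx : ∀ w, α * r x + 1 / 2 * ‖x - z‖ ^ 2 ≤ α * r w + 1 / 2 * ‖w - z‖ ^ 2)
    (w : E) : ⟪z - x, w - x⟫ ≤ α * (r w - r x) := by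
  have key : ∀ t : ℝ, 0 < t → t ≤ 1 →
      0 ≤ (α * (r w - r x) + ⟪x - z, w - x⟫) + t * (1/2 * ‖w - x‖^2) := by
    intro t ht0 ht1
    have hwt := hx (x + t • (w - x))
    have hrt : r (x + t • (w - x)) ≤ (1 - t) * r x + t * r w := by
      have := hr.2 (Set.mem_univ x) (Set.mem_univ w) (by linarith : (0:ℝ) ≤ 1 - t)
        ht0.le (by ring)
      have he : (1 - t) • x + t • w = x + t • (w - x) := by module
      rw [he] at this
      simpa [smul_eq_mul] using this
    have hnorm : ‖(x + t • (w - x)) - z‖ ^ 2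
        = ‖x - z‖^2 + 2 * t * ⟪x - z, w - x⟫ + t^2 * ‖w - x‖^2 := by
      have he : (x + t • (w - x)) - z = (x - z) + t • (w - x) := by abel
      rw [he, norm_add_sq_real, real_inner_smul_right, norm_smul]
      simp only [Real.norm_eq_abs]
      nlinarith [sq_abs t, sq_nonneg (|t| * ‖w - x‖)]
    rw [hnorm] at hwt
    have h0 : 0 ≤ α * t * (r w - r x) + t * ⟪x - z, w - x⟫ + t^2/2 * ‖w - x‖^2 := by
      nlinarith
    nlinarith [mul_pos ht0 ht0]
  have hlim := aux_limit key
  have hflip : ⟪z - x, w - x⟫ = - ⟪x - z, w - x⟫ := by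
    rw [← neg_sub x z, inner_neg_left]
  linarith [hlim, hflip.le, hflip.ge]

lemma aux_grad_ineq {f : E → ℝ} {g x : E} (hconv : ConvexOn ℝ Set.univ f)
    (hgrad : HasGradientAt f g x) (w : E) : ⟪g, w - x⟫ ≤ f w - f x := by
  set φ : ℝ → E := fun t => x + t • (w - x) with hφ
  have hline : ∀ t : ℝ, HasDerivAt φ (w - x) t := by
    intro t
    have : HasDerivAt (fun t : ℝ => t • (w - x)) (w - x) t := by
      simpa using (hasDerivAt_id t).smul_const (w - x)
    simpa [hφ] using this.const_add x
  have hcomp : HasDerivAt (fun t => f (φ t)) ⟪g, w - x⟫ 0 := by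
    have hx0 : φ 0 = x := by simp [hφ]
    have hF : HasFDerivAt f ((InnerProductSpace.toDual ℝ E) g) (φ 0) := by
      rw [hx0]; exact hgrad.hasFDerivAt
    have := hF.comp_hasDerivAt (0 : ℝ) (hline 0)
    simp at this; exact this
  have hφconv : ConvexOn ℝ Set.univ (fun t : ℝ => f (φ t)) := by
    have hc := hconv.comp_affineMap (AffineMap.lineMap x w)
    have he : (fun t : ℝ => f (φ t)) = (f ∘ (AffineMap.lineMap x w)) := by
      funext t
      simp only [Function.comp_apply, AffineMap.lineMap_apply, vsub_eq_sub,
        vadd_eq_add, hφ]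
      rw [add_comm]
    rw [he]
    have : ((AffineMap.lineMap x w : ℝ →ᵃ[ℝ] E) ⁻¹' Set.univ) = Set.univ := by simp
    rwa [this] at hc
  have hslope := hφconv.le_slope_of_hasDerivAt (Set.mem_univ (0:ℝ)) (Set.mem_univ (1:ℝ))
    one_pos hcomp
  have hs : slope (fun t => f (φ t)) 0 1 = f w - f x := by
    simp [slope, hφ]
  linarith [hslope.trans_eq hs]

/-- **Lemma 1:** the optimality (fixed-point) conditions of MG-Skip imply consensus
and global optimality for `h(w) = (1/n) ∑ᵢ fᵢ(w) + r(w)`.  The matrix `S` plays the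
role of `√((I−M̄)/2)`, whose kernel consists exactly of the consensus matrices. -/
theorem mgSkip_optimality_conditions
    (n d : ℕ) (hn : 1 ≤ n) (hd : 1 ≤ d)
    (α : ℝ) (hα0 : 0 < α)
    (f : Fin n → EuclideanSpace ℝ (Fin d) → ℝ)
    (g : Fin n → EuclideanSpace ℝ (Fin d) → EuclideanSpace ℝ (Fin d))
    (hconv : ∀ i, ConvexOn ℝ Set.univ (f i))
    (hgrad : ∀ i x, HasGradientAt (f i) (g i x) x)
    (r : EuclideanSpace ℝ (Fin d) → ℝ)
    (hrconv : ConvexOn ℝ Set.univ r)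
    (S : Matrix (Fin n) (Fin n) ℝ) (hSsymm : S.IsSymm)
    (hker : ∀ z : Mat n d, matMul S z = 0 ↔ ∀ i j, z i = z j)
    (xstar zstar ustar : Mat n d)
    (hzstar : ∀ i, zstar i = xstar i - α • g i (xstar i) - α • matMul S ustar i)
    (hSz : matMul S zstar = 0)
    (hmin : ∀ i w, α * r (xstar i) + 1 / 2 * ‖xstar i - zstar i‖ ^ 2
        ≤ α * r w + 1 / 2 * ‖w - zstar i‖ ^ 2) :
    ∃ xbar : EuclideanSpace ℝ (Fin d), (∀ i, xstar i = xbar) ∧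
      ∀ w : EuclideanSpace ℝ (Fin d),
        (1 / (n : ℝ)) * ∑ i, f i xbar + r xbar
          ≤ (1 / (n : ℝ)) * ∑ i, f i w + r w := by
  have i0 : Fin n := ⟨0, hn⟩
  set xbar := xstar i0 with hxbar
  set zbar := zstar i0 with hzbar
  have hN : (0:ℝ) < (n : ℝ) := by exact_mod_cast hn
  -- consensus of zstar
  have hzcons : ∀ i, zstar i = zbar := fun i => (hker zstar).mp hSz i i0
  -- consensus of xstar
  have hxcons : ∀ i, xstar i = xbar := by
    intro i
    refine aux_prox_unique hα0 hrconv (z := zbar) ?_ ?_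
    · intro w; have h := hmin i w; rwa [hzcons i] at h
    · intro w; exact hmin i0 w
  -- row sums of S are zero
  have hrow : ∀ i, ∑ j, S i j = 0 := by
    intro i
    set v : EuclideanSpace ℝ (Fin d) := EuclideanSpace.single (⟨0, hd⟩ : Fin d) (1:ℝ) with hv
    have hvne : v ≠ 0 := by
      intro h
      have := congrArg (fun u : EuclideanSpace ℝ (Fin d) => u (⟨0, hd⟩ : Fin d)) h
      simp [hv, EuclideanSpace.single_apply] at this
    have hz0 : matMul S (fun _ => v) = 0 := (hker _).mpr (fun _ _ => rfl)
    have h1 : (∑ j, S i j) • v = 0 := by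
      have := congrFun hz0 i
      simpa [matMul, Finset.sum_smul] using this
    rcases smul_eq_zero.mp h1 with h | h
    · exact h
    · exact absurd h hvne
  -- column sums of S are zero
  have hcol : ∀ j, ∑ i, S i j = 0 := by
    intro j
    have : ∀ i, S i j = S j i := fun i => hSsymm.apply j i
    calc ∑ i, S i j = ∑ i, S j i := by simp_rw [this]
    _ = 0 := hrow j
  -- sum of the fixed point equations
  set G : EuclideanSpace ℝ (Fin d) := ∑ i, g i xbar with hG
  have hsum : (n : ℝ) • zbar = (n : ℝ) • xbar - α • G := by
    have h1 : ∑ i, zstar i = ∑ i, (xstar i - α • g i (xstar i) - α • matMul S ustar i) :=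
      Finset.sum_congr rfl (fun i _ => hzstar i)
    have h2 : ∑ i, matMul S ustar i = 0 := by
      simp only [matMul]
      rw [Finset.sum_comm]
      simp only [← Finset.sum_smul]
      simp [hcol]
    have h3 : ∑ i, zstar i = (n : ℝ) • zbar := by
      simp_rw [hzcons]
      rw [Finset.sum_const, Finset.card_univ, Fintype.card_fin, Nat.cast_smul_eq_nsmul]
    have h4 : ∑ i, (xstar i - α • g i (xstar i) - α • matMul S ustar i)
        = (n : ℝ) • xbar - α • G := by
      rw [Finset.sum_sub_distrib, Finset.sum_sub_distrib]
      simp_rw [hxcons]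
      rw [← Finset.smul_sum, ← Finset.smul_sum, h2, smul_zero, sub_zero,
        Finset.sum_const, Finset.card_univ, Fintype.card_fin, Nat.cast_smul_eq_nsmul, hG]
    rw [← h3, h1, h4]
  have hαG : α • G = (n : ℝ) • xbar - (n : ℝ) • zbar := by
    rw [hsum]; abel
  refine ⟨xbar, hxcons, ?_⟩
  intro w
  -- gradient inequalities
  have hf : (∑ i, ⟪g i xbar, w - xbar⟫) ≤ ∑ i, (f i w - f i xbar) :=
    Finset.sum_le_sum (fun i _ => aux_grad_ineq (hconv i) (hgrad i xbar) w)
  -- prox subgradient inequality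
  have hr : ⟪zbar - xbar, w - xbar⟫ ≤ α * (r w - r xbar) :=
    aux_prox_subgrad hα0 hrconv (fun w' => hmin i0 w') w
  -- relate the inner products
  have hip : α * (∑ i, ⟪g i xbar, w - xbar⟫) = - ((n : ℝ) * ⟪zbar - xbar, w - xbar⟫) := by
    rw [← sum_inner, ← real_inner_smul_left, hαG]
    rw [inner_sub_left, real_inner_smul_left, real_inner_smul_left, inner_sub_left]
    ring
  -- combine
  have hK : α * (∑ i, f i xbar) + (n : ℝ) * α * r xbar
      ≤ α * (∑ i, f i w) + (n : ℝ) * α * r w := by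
    have h1 := mul_le_mul_of_nonneg_left hf hα0.le
    have h2 := mul_le_mul_of_nonneg_left hr hN.le
    rw [Finset.sum_sub_distrib] at h1
    nlinarith [h1, h2, hip]
  have hK2 : (∑ i, f i xbar) + (n : ℝ) * r xbar ≤ (∑ i, f i w) + (n : ℝ) * r w := by
    have := (mul_le_mul_iff_right₀ hα0).mp (by linarith : α * ((∑ i, f i xbar) + (n : ℝ) * r xbar) ≤ α * ((∑ i, f i w) + (n : ℝ) * r w))
    exact this
  have h3 := mul_le_mul_of_nonneg_left hK2 (le_of_lt (by positivity : (0:ℝ) < 1 / (n:ℝ)))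
  have hNe : (n:ℝ) ≠ 0 := hN.ne'
  rw [mul_add, mul_add] at h3
  have h4 : 1 / (n:ℝ) * ((n:ℝ) * r xbar) = r xbar := by field_simp
  have h5 : 1 / (n:ℝ) * ((n:ℝ) * r w) = r w := by field_simp
  rw [h4, h5] at h3
  exact h3
end
end

section
/- Let E be a real Hilbert space, let 0 < μ ≤ L, and let f : E → ℝ be differentiable with gradient ∇f such that f is μ-strongly convex (i.e., f − (μ/2)·‖·‖² is convex) and ∇f is L-Lipschitz. Then for every stepsize α with 0 < α < 2/L and all x, y ∈ E, ‖(x − α·∇f(x)) − (y − α·∇f(y))‖² ≤ max{ (1 − α·μ)², (1 − α·L)² } · ‖x − y‖². -/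
set_option maxHeartbeats 1000000

open Set InnerProductSpace

section Aux

variable {E : Type*} [NormedAddCommGroup E] [InnerProductSpace ℝ E]

local notation "⟪" a ", " b "⟫" => @inner ℝ _ _ a b

private lemma line_hasDerivAt' (x y : E) (t : ℝ) :
    HasDerivAt (fun t : ℝ => x + t • (y - x)) (y - x) t := by
  simpa using ((hasDerivAt_id t).smul_const (y - x)).const_add x

private lemma convex_first_order_s11 {φ : E → ℝ} {G : E →L[ℝ] ℝ} {x : E}
    (hc : ConvexOn ℝ Set.univ φ) (hd : HasFDerivAt φ G x) (y : E) :
    φ x + G (y - x) ≤ φ y := by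
  set c : ℝ → E := fun t => x + t • (y - x) with hc_def
  have hu : ConvexOn ℝ Set.univ (φ ∘ c) := by
    have h := hc.comp_affineMap (AffineMap.lineMap x y)
    have : (φ ∘ (AffineMap.lineMap x y)) = φ ∘ c := by
      funext t
      simp [hc_def, AffineMap.lineMap_apply, add_comm]
    rw [this] at h
    simpa using h
  have hc0 : c 0 = x := by simp [hc_def]
  have hd0 : HasDerivAt (φ ∘ c) (G (y - x)) 0 := by
    have h1 : HasDerivAt c (y - x) 0 := line_hasDerivAt' x y 0
    have := (hc0 ▸ hd).comp_hasDerivAt (0 : ℝ) h1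
    simpa using this
  have hs := hu.le_slope_of_hasDerivAt (S := Set.univ) (mem_univ 0) (mem_univ 1)
    zero_lt_one hd0
  have hc1 : c 1 = y := by simp [hc_def]
  rw [slope_def_field] at hs
  simp only [Function.comp, hc1, hc0] at hs
  have : G (y - x) ≤ φ y - φ x := by simpa using hs
  linarith

variable [CompleteSpace E]

private lemma descent_lemma_s11 {L : ℝ} (hL : 0 < L) {f : E → ℝ} {g : E → E}
    (hgrad : ∀ x, HasGradientAt f (g x) x) (hlip : LipschitzWith L.toNNReal g) (x y : E) :
    f y ≤ f x + ⟪g x, y - x⟫ + L / 2 * ‖y - x‖ ^ 2 := by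
  set d : E := y - x with hd_def
  set c : ℝ → E := fun t => x + t • d with hc_def
  set u : ℝ → ℝ := fun t => f (c t) - t * ⟪g x, d⟫ - L / 2 * t ^ 2 * ‖d‖ ^ 2 with hu_def
  have hu : ∀ t : ℝ, HasDerivAt u (⟪g (c t), d⟫ - ⟪g x, d⟫ - L * t * ‖d‖ ^ 2) t := by
    intro t
    have h1 : HasDerivAt (fun t => f (c t)) (⟪g (c t), d⟫) t := by
      have := ((hgrad (c t)).hasFDerivAt).comp_hasDerivAt t (line_hasDerivAt' x y t)
      simpa [hc_def, hd_def, toDual_apply_apply, Function.comp_def] using this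
    have h2 : HasDerivAt (fun t : ℝ => t * ⟪g x, d⟫) (⟪g x, d⟫) t := by
      simpa using (hasDerivAt_id t).mul_const (⟪g x, d⟫)
    have h3 : HasDerivAt (fun t : ℝ => L / 2 * t ^ 2 * ‖d‖ ^ 2) (L * t * ‖d‖ ^ 2) t := by
      have := ((hasDerivAt_pow 2 t).const_mul (L / 2)).mul_const (‖d‖ ^ 2)
      exact this.congr_deriv (by ring)
    exact (h1.sub h2).sub h3
  have hmono : AntitoneOn u (Icc (0:ℝ) 1) := by
    apply antitoneOn_of_deriv_nonpos (convex_Icc 0 1)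
    · exact fun t _ => (hu t).differentiableAt.continuousAt.continuousWithinAt
    · exact fun t _ => ((hu t).differentiableAt).differentiableWithinAt
    · intro t ht
      rw [interior_Icc] at ht
      rw [(hu t).deriv]
      have hbound : ⟪g (c t) - g x, d⟫ ≤ L * t * ‖d‖ ^ 2 := by
        calc ⟪g (c t) - g x, d⟫ ≤ ‖g (c t) - g x‖ * ‖d‖ := real_inner_le_norm _ _
          _ ≤ (L * ‖c t - x‖) * ‖d‖ := by
              apply mul_le_mul_of_nonneg_right _ (norm_nonneg _)
              have := hlip.dist_le_mul (c t) x
              rw [dist_eq_norm, dist_eq_norm] at this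
              simpa [Real.coe_toNNReal L hL.le] using this
          _ = L * t * ‖d‖ ^ 2 := by
              have : ‖c t - x‖ = t * ‖d‖ := by
                simp [hc_def, norm_smul, abs_of_pos ht.1]
              rw [this]; ring
      rw [inner_sub_left] at hbound
      linarith
  have h01 := hmono (left_mem_Icc.2 zero_le_one) (right_mem_Icc.2 zero_le_one) zero_le_one
  have hc1 : c 1 = y := by simp [hc_def, hd_def]
  have hc0 : c 0 = x := by simp [hc_def]
  simp only [hu_def, hc1, hc0] at h01
  norm_num at h01
  linarith

end Aux

/-- **Gradient-step contraction** (established in the proof of Theorem 1): for a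
`μ`-strongly convex `L`-smooth function `f` on a real Hilbert space and a stepsize
`0 < α < 2/L`, the gradient-descent map `x ↦ x − α∇f(x)` is Lipschitz with
constant `max{|1−αμ|, |1−αL|}`. -/
theorem gradient_step_contraction
    {E : Type*} [NormedAddCommGroup E] [InnerProductSpace ℝ E] [CompleteSpace E]
    (μ L : ℝ) (hμ : 0 < μ) (hμL : μ ≤ L)
    (f : E → ℝ) (g : E → E)
    (hgrad : ∀ x, HasGradientAt f (g x) x)
    (hstrong : ConvexOn ℝ Set.univ (fun x => f x - μ / 2 * ‖x‖ ^ 2))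
    (hlip : LipschitzWith L.toNNReal g)
    (α : ℝ) (hα0 : 0 < α) (hα : α < 2 / L) (x y : E) :
    ‖(x - α • g x) - (y - α • g y)‖ ^ 2
      ≤ max ((1 - α * μ) ^ 2) ((1 - α * L) ^ 2) * ‖x - y‖ ^ 2 := by
  have hL : 0 < L := lt_of_lt_of_le hμ hμL
  set φ : E → ℝ := fun z => f z - μ / 2 * ‖z‖ ^ 2 with hφ_def
  set gφ : E → E := fun z => g z - μ • z with hgφ_def
  -- the Fréchet derivative of φ
  have hφd : ∀ z : E, HasFDerivAt φ
      (InnerProductSpace.toDual ℝ E (g z) - (μ / 2) • (2 • innerSL ℝ z)) z := fun z =>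
    ((hgrad z).hasFDerivAt).sub (((hasStrictFDerivAt_norm_sq z).hasFDerivAt).const_mul (μ / 2))
  have hφd_apply : ∀ z v : E,
      (InnerProductSpace.toDual ℝ E (g z) - (μ / 2) • (2 • innerSL ℝ z)) v
        = @inner ℝ _ _ (gφ z) v := by
    intro z v
    simp [hgφ_def, inner_sub_left, real_inner_smul_left, toDual_apply_apply, two_smul]
    ring
  -- first-order condition for φ
  have hfo : ∀ a b : E, φ a + @inner ℝ _ _ (gφ a) (b - a) ≤ φ b := by
    intro a b
    have := convex_first_order_s11 hstrong (hφd a) b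
    rwa [hφd_apply] at this
  set d : E := x - y with hd_def
  set h : E := g x - g y with hh_def
  set s : ℝ := @inner ℝ _ _ h d with hs_def
  set m : ℝ := ‖d‖ with hm_def
  set n : ℝ := ‖h‖ with hn_def
  have hm0 : 0 ≤ m := norm_nonneg _
  have hn0 : 0 ≤ n := norm_nonneg _
  -- monotonicity: s ≥ μ m²
  have hmono : μ * m ^ 2 ≤ s := by
    have h1 := hfo x y
    have h2 := hfo y x
    have hxy : x - y = -(y - x) := by abel
    have e1 : @inner ℝ _ _ (gφ x) (y - x) + @inner ℝ _ _ (gφ y) (x - y) ≤ 0 := by linarith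
    have e2 : @inner ℝ _ _ (gφ x - gφ y) (x - y) ≥ 0 := by
      rw [inner_sub_left]
      have : @inner ℝ _ _ (gφ x) (y - x) = - @inner ℝ _ _ (gφ x) (x - y) := by
        rw [hxy, inner_neg_right, neg_neg]
      linarith [this ▸ e1]
    have e3 : gφ x - gφ y = h - μ • d := by
      simp only [hgφ_def, hh_def, hd_def, smul_sub]; abel
    rw [e3, inner_sub_left, real_inner_smul_left, real_inner_self_eq_norm_sq] at e2
    simp only [← hs_def, ← hm_def] at e2
    linarith
  -- Lipschitz: n ≤ L m
  have hlipn : n ≤ L * m := by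
    have := hlip.dist_le_mul x y
    rw [dist_eq_norm, dist_eq_norm] at this
    simpa [Real.coe_toNNReal L hL.le, hn_def, hm_def, hh_def, hd_def] using this
  -- Cauchy–Schwarz
  have hCS : s ≤ n * m := by
    calc s ≤ ‖h‖ * ‖d‖ := real_inner_le_norm _ _
      _ = n * m := rfl
  -- key inequality: (μ + L) s ≥ n² + μ L m²
  have key : n ^ 2 + μ * L * m ^ 2 ≤ (μ + L) * s := by
    rcases eq_or_lt_of_le hμL with hEq | hLt
    · -- μ = L
      subst hEq
      nlinarith [hmono, hlipn, hCS, hm0, hn0, hμ]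
    · -- μ < L : Baillon–Haddad for φ
      set L' : ℝ := L - μ with hL'_def
      have hL'0 : 0 < L' := by simp [hL'_def]; linarith
      -- descent lemma for φ with constant L'
      have hφdesc : ∀ a b : E, φ b ≤ φ a + @inner ℝ _ _ (gφ a) (b - a) + L' / 2 * ‖b - a‖ ^ 2 := by
        intro a b
        have hf' := descent_lemma_s11 hL hgrad hlip a b
        have hb : ‖b‖ ^ 2 = ‖a‖ ^ 2 + 2 * @inner ℝ _ _ a (b - a) + ‖b - a‖ ^ 2 := by
          have hba : b = a + (b - a) := by abel
          conv_lhs => rw [hba]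
          rw [@norm_add_sq_real]
        have hinner : @inner ℝ _ _ (gφ a) (b - a)
            = @inner ℝ _ _ (g a) (b - a) - μ * @inner ℝ _ _ a (b - a) := by
          simp [hgφ_def, inner_sub_left, real_inner_smul_left]
        simp only [hφ_def]
        rw [hinner, hb]
        simp only [hL'_def]
        ring_nf
        ring_nf at hf'
        linarith
      -- Baillon–Haddad step
      have hBH : ∀ a z : E,
          φ a + @inner ℝ _ _ (gφ a) (z - a) + 1 / (2 * L') * ‖gφ z - gφ a‖ ^ 2 ≤ φ z := by
        intro a z
        set k : E := gφ z - gφ a with hk_def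
        set b : E := z - (1 / L') • k with hb_def
        -- F w = φ w - ⟪gφ a, w⟫ is convex with min at a
        set F : E → ℝ := fun w => φ w - @inner ℝ _ _ (gφ a) w with hF_def
        have hFconv : ConvexOn ℝ Set.univ F := by
          have hlin : ConcaveOn ℝ Set.univ (fun w : E => @inner ℝ _ _ (gφ a) w) := by
            constructor
            · exact convex_univ
            · intro p _ q _ c1 c2 _ _ _
              simp only [smul_eq_mul, inner_add_right, real_inner_smul_right]
              exact le_rfl

          exact hstrong.sub hlin
        have hFd : ∀ w : E, HasFDerivAt F
            ((InnerProductSpace.toDual ℝ E (g w) - (μ / 2) • (2 • innerSL ℝ w))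
              - innerSL ℝ (gφ a)) w := fun w =>
          (hφd w).sub ((innerSL ℝ (gφ a)).hasFDerivAt)
        have hFmin : F a ≤ F b := by
          have := convex_first_order_s11 hFconv (hFd a) b
          have hz : ((InnerProductSpace.toDual ℝ E (g a) - (μ / 2) • (2 • innerSL ℝ a))
              - innerSL ℝ (gφ a)) (b - a) = 0 := by
            have h1 := hφd_apply a (b - a)
            simp only [ContinuousLinearMap.sub_apply] at h1 ⊢
            rw [h1]
            simp
          rw [hz] at this
          linarith
        -- descent from z to b
        have hdb := hφdesc z b
        have hbz : b - z = -((1 / L') • k) := by simp [hb_def]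
        have hiz : @inner ℝ _ _ (gφ z) (b - z)
            = @inner ℝ _ _ (gφ a) (b - z) - (1 / L') * ‖k‖ ^ 2 := by
          have : @inner ℝ _ _ (gφ z - gφ a) (b - z) = - ((1 / L') * ‖k‖ ^ 2) := by
            rw [hbz, ← hk_def, inner_neg_right, real_inner_smul_right,
              real_inner_self_eq_norm_sq]
          rw [inner_sub_left] at this
          linarith
        have hnbz : ‖b - z‖ ^ 2 = (1 / L') ^ 2 * ‖k‖ ^ 2 := by
          rw [hbz, norm_neg, norm_smul]
          rw [mul_pow]
          congr 1
          rw [Real.norm_eq_abs, sq_abs]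
        -- combine
        have hFb : F b ≤ F z - 1 / (2 * L') * ‖k‖ ^ 2 := by
          simp only [hF_def]
          have hgab : @inner ℝ _ _ (gφ a) b
              = @inner ℝ _ _ (gφ a) z + @inner ℝ _ _ (gφ a) (b - z) := by
            rw [← inner_add_right]
            congr 1
            abel
          rw [hgab]
          rw [hiz, hnbz] at hdb
          have hL'ne : L' ≠ 0 := ne_of_gt hL'0
          have : L' / 2 * ((1 / L') ^ 2 * ‖k‖ ^ 2) = 1 / (2 * L') * ‖k‖ ^ 2 := by
            field_simp
          rw [this] at hdb
          have hsum : 1 / (2 * L') * ‖k‖ ^ 2 + 1 / (2 * L') * ‖k‖ ^ 2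
              = 1 / L' * ‖k‖ ^ 2 := by
            rw [← add_mul]
            have : 1 / (2 * L') + 1 / (2 * L') = 1 / L' := by
              field_simp
              norm_num
            rw [this]
          linarith
        have := le_trans hFmin hFb
        simp only [hF_def] at this
        have hgaz : @inner ℝ _ _ (gφ a) z
            = @inner ℝ _ _ (gφ a) a + @inner ℝ _ _ (gφ a) (z - a) := by
          rw [← inner_add_right]; congr 1; abel
        rw [hgaz] at this
        linarith
      -- apply twice and add
      have h1 := hBH x y
      have h2 := hBH y x
      have hswap : gφ x - gφ y = -(gφ y - gφ x) := by abel
      have hns : ‖gφ y - gφ x‖ = ‖gφ x - gφ y‖ := by rw [hswap, norm_neg]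
      rw [hns] at h1
      have hxy' : y - x = -(x - y) := by abel
      have hinnflip : @inner ℝ _ _ (gφ x) (y - x) = - @inner ℝ _ _ (gφ x) (x - y) := by
        rw [hxy', inner_neg_right]
      rw [hinnflip] at h1
      have hcoco : 1 / L' * ‖gφ x - gφ y‖ ^ 2 ≤ @inner ℝ _ _ (gφ x - gφ y) (x - y) := by
        rw [inner_sub_left]
        have h2' : @inner ℝ _ _ (gφ y) (x - y) + 1 / (2 * L') * ‖gφ x - gφ y‖ ^ 2
            ≤ φ x - φ y := by linarith
        have h1' : - @inner ℝ _ _ (gφ x) (x - y) + 1 / (2 * L') * ‖gφ x - gφ y‖ ^ 2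
            ≤ φ y - φ x := by linarith
        have hsum : 1 / (2 * L') * ‖gφ x - gφ y‖ ^ 2 + 1 / (2 * L') * ‖gφ x - gφ y‖ ^ 2
            = 1 / L' * ‖gφ x - gφ y‖ ^ 2 := by
          rw [← add_mul]
          have : 1 / (2 * L') + 1 / (2 * L') = 1 / L' := by
            field_simp
            norm_num
          rw [this]
        linarith [h1', h2']
      -- expand
      have e3 : gφ x - gφ y = h - μ • d := by
        simp only [hgφ_def, hh_def, hd_def, smul_sub]; abel
      have hinn : @inner ℝ _ _ (gφ x - gφ y) (x - y) = s - μ * m ^ 2 := by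
        rw [e3, inner_sub_left, real_inner_smul_left, real_inner_self_eq_norm_sq]
        try simp only [← hs_def, ← hd_def, ← hm_def]
      have hnrm : ‖gφ x - gφ y‖ ^ 2 = n ^ 2 - 2 * μ * s + μ ^ 2 * m ^ 2 := by
        rw [e3, @norm_sub_sq_real, real_inner_smul_right, norm_smul, Real.norm_eq_abs]
        rw [mul_pow, sq_abs]
        try simp only [← hs_def, ← hn_def, ← hm_def]
        ring
      rw [hinn, hnrm] at hcoco
      have hL'ne : L' ≠ 0 := ne_of_gt hL'0
      have hcoco' : n ^ 2 - 2 * μ * s + μ ^ 2 * m ^ 2 ≤ L' * (s - μ * m ^ 2) := by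
        have := mul_le_mul_of_nonneg_left hcoco hL'0.le
        rw [← mul_assoc] at this
        field_simp at this
        linarith [this]
      simp only [hL'_def] at hcoco'
      nlinarith [hcoco']
  -- expand the left-hand side
  have hlhs : ‖(x - α • g x) - (y - α • g y)‖ ^ 2 = m ^ 2 - 2 * α * s + α ^ 2 * n ^ 2 := by
    have hvec : (x - α • g x) - (y - α • g y) = d - α • h := by
      simp only [hd_def, hh_def, smul_sub]; abel
    rw [hvec, @norm_sub_sq_real, real_inner_smul_right, norm_smul, Real.norm_eq_abs,
      mul_pow, sq_abs, real_inner_comm]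
    try simp only [← hs_def, ← hn_def, ← hm_def]
    ring
  rw [hlhs]
  have hαL : α * L < 2 := (lt_div_iff₀ hL).mp hα
  have hnμ : μ * m ≤ n := by
    nlinarith [key, hCS, hlipn, hm0, hn0, hμ, hL]
  have hμL0 : 0 < μ + L := by linarith
  rcases le_or_gt (α * (μ + L)) 2 with hcase | hcase
  · -- contraction factor (1 - αμ)²
    have hstep : m ^ 2 - 2 * α * s + α ^ 2 * n ^ 2 ≤ (1 - α * μ) ^ 2 * m ^ 2 := by
      have P1 : 0 ≤ α * ((μ + L) * s - n ^ 2 - μ * L * m ^ 2) :=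
        mul_nonneg hα0.le (by linarith [key])
      have P2 : 0 ≤ α * ((2 - α * (μ + L)) * (n ^ 2 - (μ * m) ^ 2)) :=
        mul_nonneg hα0.le (mul_nonneg (by linarith) (by nlinarith [hnμ, hm0, hμ]))
      nlinarith [P1, P2, hμL0]
    calc m ^ 2 - 2 * α * s + α ^ 2 * n ^ 2 ≤ (1 - α * μ) ^ 2 * m ^ 2 := hstep
      _ ≤ max ((1 - α * μ) ^ 2) ((1 - α * L) ^ 2) * m ^ 2 :=
        mul_le_mul_of_nonneg_right (le_max_left _ _) (sq_nonneg _)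
  · -- contraction factor (1 - αL)²
    have hstep : m ^ 2 - 2 * α * s + α ^ 2 * n ^ 2 ≤ (1 - α * L) ^ 2 * m ^ 2 := by
      have P1 : 0 ≤ α * ((μ + L) * s - n ^ 2 - μ * L * m ^ 2) :=
        mul_nonneg hα0.le (by linarith [key])
      have P2 : 0 ≤ α * ((α * (μ + L) - 2) * ((L * m) ^ 2 - n ^ 2)) :=
        mul_nonneg hα0.le (mul_nonneg (by linarith) (by nlinarith [hlipn, hm0, hn0, hL]))
      nlinarith [P1, P2, hμL0]
    calc m ^ 2 - 2 * α * s + α ^ 2 * n ^ 2 ≤ (1 - α * L) ^ 2 * m ^ 2 := hstep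
      _ ≤ max ((1 - α * μ) ^ 2) ((1 - α * L) ^ 2) * m ^ 2 :=
        mul_le_mul_of_nonneg_right (le_max_right _ _) (sq_nonneg _)
end
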